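/- arXiv:2104.05043 — 3 statements merged into one kernel-verified Lean document; each statement's English description precedes it below -/
import Mathlib

section
/- Theorem 1 (performance gap bound): Let ω, s, g, s̃ be finite random variables with joint p(ω,s,g,s̃) = p(ω)p(s|ω)p(g|s)p(s̃|g), where the relabeling kernel p(g|s) is induced by a bijection f (g = f(s) deterministically) and p(s|ω) is deterministic. Let p'(g) be a prior goal distribution and define η = E_{p'(g)p(s̃|g)}[log p'(g|s̃) - log p'(g)] and η̂ = E_{p(ω,s,g,s̃)}[log p(ω|s̃) - log p(ω)]. Then η̂ - η ≤ 2·R_max·sqrt(ε/2), where R_max = max over pairs (g,s̃) in the support of p'(g)p(s̃|g) of (log p'(g|s̃) - log p'(g)), and ε = E_{p(ω)}[KL(p(s|ω) ‖ p'(s))] with p'(s) the pushforward of p'(g) under f⁻¹. -/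
/-!
Let `r g = KL(k g ‖ m)`, where `m` is the marginal of `s̃` under the prior rollout. Then
`η = ∑ p' r`, while `η̂` is the mutual information of goal and outcome when goals are drawn
from the pushforward `pG` of `p(ω)`. The mixture of the rows of a kernel minimises their average
divergence to a fixed distribution (the defect is the divergence of the mixture itself), so
`η̂ ≤ ∑ pG r`, and since `0 ≤ r ≤ Rmax`, `η̂ - η ≤ Rmax · t` with `t = ∑ max (pG - p') 0`.
Because `p(s|ω)` is deterministic, `ε = ∑ pG (-log p')` is a cross-entropy, and
`max (a - b) 0 ≤ a (1 - b) ≤ a (-log b)` gives `t ≤ ε`; together with `t ≤ 1` this yields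
`t ≤ √ε ≤ 2 √(ε / 2)`, so Pinsker's inequality is not needed.
-/

noncomputable def kl {A : Type*} [Fintype A] (P Q : A → ℝ) : ℝ :=
  ∑ a, P a * Real.log (P a / Q a)

open Real Finset

lemma sub_le_mul_log_div {x y : ℝ} (hx : 0 ≤ x) (hy : 0 ≤ y) (hxy : 0 < x → 0 < y) :
    x - y ≤ x * log (x / y) := by
  rcases hx.eq_or_lt with rfl | hx
  · simpa using hy
  · have hy := hxy hx
    have h := log_le_sub_one_of_pos (div_pos hy hx)
    rw [← inv_div, log_inv] at h
    have hinv : x * (x / y)⁻¹ = y := by field_simp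
    nlinarith [mul_le_mul_of_nonneg_left h hx.le]

lemma log_mul_div_sub_log {a x y : ℝ} (ha : 0 < a) (hx : 0 < x) (hy : 0 < y) :
    log (a * x / y) - log a = log (x / y) := by
  rw [mul_div_assoc, log_mul ha.ne' (div_pos hx hy).ne']
  ring

section KL

variable {α : Type*} [Fintype α] {P Q : α → ℝ}

lemma kl_nonneg (hP : ∀ a, 0 ≤ P a) (hQ : ∀ a, 0 ≤ Q a) (hPQ : ∀ a, 0 < P a → 0 < Q a)
    (hsum : ∑ a, Q a ≤ ∑ a, P a) : 0 ≤ kl P Q :=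
  calc 0 ≤ ∑ a, (P a - Q a) := by rw [sum_sub_distrib]; linarith
    _ ≤ kl P Q := sum_le_sum fun a _ => sub_le_mul_log_div (hP a) (hQ a) (hPQ a)

lemma kl_le_of_log_div_le {R : ℝ} (hP : ∀ a, 0 ≤ P a) (hP1 : ∑ a, P a = 1)
    (hR : ∀ a, 0 < P a → log (P a / Q a) ≤ R) : kl P Q ≤ R :=
  calc kl P Q ≤ ∑ a, P a * R := sum_le_sum fun a _ => by
        rcases (hP a).eq_or_lt with h | h
        · simp [← h]
        · exact mul_le_mul_of_nonneg_left (hR a h) h.le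
    _ = R := by rw [← sum_mul, hP1, one_mul]

lemma kl_ite_eq_left [DecidableEq α] (a₀ : α) (Q : α → ℝ) :
    kl (fun a => if a = a₀ then 1 else 0) Q = -log (Q a₀) := by
  simp [kl, log_inv]

end KL

section Mixture

variable {ι β : Type*} [Fintype ι] {w : ι → ℝ} {κ : ι → β → ℝ}

def mixture (w : ι → ℝ) (κ : ι → β → ℝ) (b : β) : ℝ := ∑ i, w i * κ i b

noncomputable def mutualInfo [Fintype β] (w : ι → ℝ) (κ : ι → β → ℝ) : ℝ :=
  ∑ i, w i * kl (κ i) (mixture w κ)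

lemma mixture_pos (hw : ∀ i, 0 ≤ w i) (hκ : ∀ i b, 0 ≤ κ i b) {i : ι} {b : β}
    (hi : 0 < w i) (hb : 0 < κ i b) : 0 < mixture w κ b :=
  (mul_pos hi hb).trans_le <|
    single_le_sum (f := fun j => w j * κ j b) (fun j _ => mul_nonneg (hw j) (hκ j b)) (mem_univ i)

lemma sum_mixture [Fintype β] (hκ1 : ∀ i, ∑ b, κ i b = 1) :
    ∑ b, mixture w κ b = ∑ i, w i := by
  simp only [mixture]
  rw [sum_comm]
  simp [← mul_sum, hκ1]

lemma kl_mixture_nonneg [Fintype β] (hw : ∀ i, 0 < w i) (hw1 : ∑ i, w i = 1)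
    (hκ : ∀ i b, 0 ≤ κ i b) (hκ1 : ∀ i, ∑ b, κ i b = 1) (i : ι) :
    0 ≤ kl (κ i) (mixture w κ) :=
  kl_nonneg (hκ i) (fun b => sum_nonneg fun j _ => mul_nonneg (hw j).le (hκ j b))
    (fun _ => mixture_pos (fun j => (hw j).le) hκ (hw i)) (by rw [sum_mixture hκ1, hw1, hκ1])

lemma kl_mixture_le [Fintype β] {R : ℝ} (hw : ∀ i, 0 < w i) (hκ : ∀ i b, 0 ≤ κ i b)
    (hκ1 : ∀ i, ∑ b, κ i b = 1)
    (hR : ∀ i b, 0 < w i * κ i b → log (w i * κ i b / ∑ j, w j * κ j b) - log (w i) ≤ R)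
    (i : ι) : kl (κ i) (mixture w κ) ≤ R :=
  kl_le_of_log_div_le (hκ i) (hκ1 i) fun b hb =>
    (log_mul_div_sub_log (hw i) hb (mixture_pos (fun j => (hw j).le) hκ (hw i) hb)).symm.trans_le
      (hR i b (mul_pos (hw i) hb))

lemma sum_sum_mul_log_sub_log_eq_mutualInfo [Fintype β] (hw : ∀ i, 0 < w i)
    (hκ : ∀ i b, 0 ≤ κ i b) :
    ∑ i, ∑ b, w i * κ i b * (log (w i * κ i b / ∑ j, w j * κ j b) - log (w i)) =
      mutualInfo w κ := by
  refine sum_congr rfl fun i _ => ?_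
  rw [kl, mul_sum]
  refine sum_congr rfl fun b _ => ?_
  rcases (hκ i b).eq_or_lt with h | h
  · simp [← h]
  · have hm : 0 < ∑ j, w j * κ j b := mixture_pos (fun j => (hw j).le) hκ (hw i) h
    rw [log_mul_div_sub_log (hw i) h hm, mixture]
    ring

lemma mutualInfo_le_sum_mul_kl [Fintype β] {q : β → ℝ} (hw : ∀ i, 0 ≤ w i)
    (hκ : ∀ i b, 0 ≤ κ i b) (hκ1 : ∀ i, ∑ b, κ i b = 1) (hq : ∀ b, 0 ≤ q b)
    (hκq : ∀ i b, 0 < κ i b → 0 < q b) (hq1 : ∑ b, q b ≤ ∑ i, w i) :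
    mutualInfo w κ ≤ ∑ i, w i * kl (κ i) q := by
  have hmq : ∀ b, 0 < mixture w κ b → 0 < q b := by
    intro b hm
    by_contra hqb
    have hzero : ∀ i, κ i b = 0 := fun i =>
      le_antisymm (not_lt.1 (mt (hκq i b) hqb)) (hκ i b)
    simp [mixture, hzero] at hm
  have hdefect : ∑ i, w i * kl (κ i) q - mutualInfo w κ = kl (mixture w κ) q := by
    simp only [mutualInfo, kl, mixture, mul_sum, ← sum_sub_distrib]
    rw [sum_comm]
    refine sum_congr rfl fun b _ => ?_
    rw [sum_mul]
    refine sum_congr rfl fun i _ => ?_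
    rcases (mul_nonneg (hw i) (hκ i b)).eq_or_lt with h | h
    · rw [← mul_assoc, ← mul_assoc, ← h]
      ring
    · have hκb := pos_of_mul_pos_right h (hw i)
      have hqb := hκq i b hκb
      have hm : 0 < ∑ j, w j * κ j b := mixture_pos hw hκ (pos_of_mul_pos_left h (hκ i b)) hκb
      rw [log_div hκb.ne' hqb.ne', log_div hκb.ne' hm.ne', log_div hm.ne' hqb.ne']
      ring
  have hkl := kl_nonneg (P := mixture w κ)
    (fun b => sum_nonneg fun i _ => mul_nonneg (hw i) (hκ i b)) hq hmq (by rwa [sum_mixture hκ1])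
  linarith

end Mixture

section Pushforward

variable {α β : Type*} [Fintype α] [DecidableEq β]

def pushforward (w : α → ℝ) (φ : α → β) (b : β) : ℝ := ∑ a with φ a = b, w a

lemma sum_mul_comp_eq_sum_pushforward [Fintype β] (w : α → ℝ) (φ : α → β)
    (F : β → ℝ) : ∑ a, w a * F (φ a) = ∑ b, pushforward w φ b * F b := by
  rw [← sum_fiberwise univ φ]
  refine sum_congr rfl fun b _ => ?_
  rw [pushforward, sum_mul]
  exact sum_congr rfl fun a ha => by rw [(mem_filter.1 ha).2]

lemma pushforward_nonneg {w : α → ℝ} (hw : ∀ a, 0 ≤ w a) (φ : α → β) (b : β) :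
    0 ≤ pushforward w φ b :=
  sum_nonneg fun a _ => hw a

lemma sum_pushforward [Fintype β] (w : α → ℝ) (φ : α → β) :
    ∑ b, pushforward w φ b = ∑ a, w a := by
  simpa using (sum_mul_comp_eq_sum_pushforward w φ fun _ => 1).symm

end Pushforward

lemma sum_sub_mul_le_mul_sum_max {α : Type*} [Fintype α] {a b r : α → ℝ} {R : ℝ}
    (hr : ∀ x, 0 ≤ r x) (hrR : ∀ x, r x ≤ R) :
    ∑ x, (a x - b x) * r x ≤ R * ∑ x, max (a x - b x) 0 := by
  rw [mul_sum]
  refine sum_le_sum fun x _ => ?_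
  calc (a x - b x) * r x ≤ max (a x - b x) 0 * r x :=
        mul_le_mul_of_nonneg_right (le_max_left _ _) (hr x)
    _ ≤ max (a x - b x) 0 * R := mul_le_mul_of_nonneg_left (hrR x) (le_max_right _ _)
    _ = R * max (a x - b x) 0 := mul_comm _ _

lemma sum_max_sub_le_sqrt_sum_mul_neg_log {α : Type*} [Fintype α] {P Q : α → ℝ}
    (hP : ∀ a, 0 ≤ P a) (hP1 : ∑ a, P a = 1) (hQ : ∀ a, 0 < Q a) (hQ1 : ∑ a, Q a = 1) :
    ∑ a, max (P a - Q a) 0 ≤ √(∑ a, P a * -log (Q a)) := by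
  have hP_le : ∀ a, P a ≤ 1 := fun a =>
    hP1 ▸ single_le_sum (fun b _ => hP b) (mem_univ a)
  have hQ_le : ∀ a, Q a ≤ 1 := fun a =>
    hQ1 ▸ single_le_sum (fun b _ => (hQ b).le) (mem_univ a)
  set t := ∑ a, max (P a - Q a) 0
  have ht0 : 0 ≤ t := sum_nonneg fun a _ => le_max_right _ _
  have ht1 : t ≤ 1 :=
    hP1 ▸ sum_le_sum fun a _ => max_le (by linarith [hQ a]) (hP a)
  have htε : t ≤ ∑ a, P a * -log (Q a) := sum_le_sum fun a _ => by
    have hlog : 1 - Q a ≤ -log (Q a) := by linarith [log_le_sub_one_of_pos (hQ a)]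
    calc max (P a - Q a) 0 ≤ P a * (1 - Q a) :=
          max_le (by nlinarith [hP_le a, hQ a]) (mul_nonneg (hP a) (by linarith [hQ_le a]))
      _ ≤ P a * -log (Q a) := mul_le_mul_of_nonneg_left hlog (hP a)
  exact (le_abs_self t).trans (abs_le_sqrt (by nlinarith))

lemma sqrt_le_two_mul_sqrt_half (x : ℝ) : √x ≤ 2 * √(x / 2) := by
  calc √x = √2 * √(x / 2) := by rw [← sqrt_mul zero_le_two]; ring_nf
    _ ≤ 2 * √(x / 2) := by
      gcongr
      rw [sqrt_le_left zero_le_two]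
      norm_num

theorem stmt7_general {Ω S G S' : Type*} [Fintype Ω] [Fintype S] [DecidableEq S] [Fintype G] [Fintype S']
    (pΩ : Ω → ℝ) (sOf : Ω → S) (f : S ≃ G) (k : G → S' → ℝ) (p' : G → ℝ)
    (hΩ0 : ∀ ω, 0 < pΩ ω) (hΩ1 : ∑ ω, pΩ ω = 1)
    (hk0 : ∀ g s', 0 ≤ k g s') (hk1 : ∀ g, ∑ s', k g s' = 1)
    (hp'0 : ∀ g, 0 < p' g) (hp'1 : ∑ g, p' g = 1)
    (η η' ε Rmax : ℝ)
    (hη : η = ∑ g, ∑ s', p' g * k g s' *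
      (Real.log (p' g * k g s' / ∑ g', p' g' * k g' s') - Real.log (p' g)))
    (hη' : η' = ∑ ω, ∑ s', pΩ ω * k (f (sOf ω)) s' *
      (Real.log (pΩ ω * k (f (sOf ω)) s' / ∑ ω', pΩ ω' * k (f (sOf ω')) s') -
        Real.log (pΩ ω)))
    (hε : ε = ∑ ω, pΩ ω *
      kl (fun s => if s = sOf ω then (1 : ℝ) else 0) (fun s => p' (f s)))
    (hRub : ∀ g s', 0 < p' g * k g s' →
      Real.log (p' g * k g s' / ∑ g', p' g' * k g' s') - Real.log (p' g) ≤ Rmax) :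
    η' - η ≤ 2 * Rmax * Real.sqrt (ε / 2) := by
  classical
  set r : G → ℝ := fun g => kl (k g) (mixture p' k)
  have hr0 : ∀ g, 0 ≤ r g := kl_mixture_nonneg hp'0 hp'1 hk0 hk1
  have hrR : ∀ g, r g ≤ Rmax := kl_mixture_le hp'0 hk0 hk1 hRub
  set pG := pushforward pΩ (fun ω => f (sOf ω))
  have hη_eq : η = ∑ g, p' g * r g := hη.trans (sum_sum_mul_log_sub_log_eq_mutualInfo hp'0 hk0)
  have hη'_le : η' ≤ ∑ g, pG g * r g := by
    rw [hη', sum_sum_mul_log_sub_log_eq_mutualInfo hΩ0 fun ω => hk0 _,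
      ← sum_mul_comp_eq_sum_pushforward]
    refine mutualInfo_le_sum_mul_kl (fun ω => (hΩ0 ω).le) (fun ω => hk0 _) (fun ω => hk1 _)
      (fun s' => sum_nonneg fun g _ => mul_nonneg (hp'0 g).le (hk0 g s'))
      (fun ω s' => mixture_pos (fun g => (hp'0 g).le) hk0 (hp'0 _)) ?_
    rw [sum_mixture hk1, hp'1, hΩ1]
  have hε_eq : ε = ∑ g, pG g * -log (p' g) := by
    simp only [hε, kl_ite_eq_left]
    exact sum_mul_comp_eq_sum_pushforward pΩ _ fun g => -log (p' g)
  have hpG1 : ∑ g, pG g = 1 := by rw [sum_pushforward, hΩ1]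
  obtain ⟨g₀, -⟩ := nonempty_of_sum_ne_zero (hp'1.trans_ne one_ne_zero)
  calc η' - η ≤ ∑ g, (pG g - p' g) * r g := by
        simp only [sub_mul, sum_sub_distrib]; linarith
    _ ≤ Rmax * ∑ g, max (pG g - p' g) 0 := sum_sub_mul_le_mul_sum_max hr0 hrR
    _ ≤ Rmax * (2 * √(ε / 2)) := by
        gcongr
        · exact (hr0 g₀).trans (hrR g₀)
        refine (sum_max_sub_le_sqrt_sum_mul_neg_log (pushforward_nonneg (fun ω => (hΩ0 ω).le) _)
          hpG1 hp'0 hp'1).trans ?_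
        rw [← hε_eq]
        exact sqrt_le_two_mul_sqrt_half ε
    _ = 2 * Rmax * √(ε / 2) := by ring

/-- Theorem 1 (GPIM performance-gap bound).  The joint is
`p(ω,s,g,s̃) = p(ω)·[s = sOf ω]·[g = f s]·k(s̃|g)`: `p(s|ω)` is deterministic
(given by `sOf`) and the relabeling is the bijection `f`.  `p'` is a prior
goal distribution with rollout `p'(g)·k(s̃|g)`.  With
`η = E_{p'(g)k(s̃|g)}[log p'(g|s̃) - log p'(g)]`,
`η̂ = E_{p(ω,s,g,s̃)}[log p(ω|s̃) - log p(ω)]`,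
`Rmax` the maximum of `log p'(g|s̃) - log p'(g)` over the support of the
prior rollout, and `ε = E_{p(ω)}[KL(p(s|ω) ‖ p'(s))]` with `p'(s)` the
pushforward of `p'` under `f⁻¹`, we have `η̂ - η ≤ 2·Rmax·√(ε/2)`. -/
theorem stmt7 {Ω S G S' : Type*} [Fintype Ω] [Fintype S] [DecidableEq S] [Fintype G] [Fintype S']
    (pΩ : Ω → ℝ) (sOf : Ω → S) (f : S ≃ G) (k : G → S' → ℝ) (p' : G → ℝ)
    (hΩ0 : ∀ ω, 0 < pΩ ω) (hΩ1 : ∑ ω, pΩ ω = 1)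
    (hk0 : ∀ g s', 0 ≤ k g s') (hk1 : ∀ g, ∑ s', k g s' = 1)
    (hp'0 : ∀ g, 0 < p' g) (hp'1 : ∑ g, p' g = 1)
    (η η' ε Rmax : ℝ)
    (hη : η = ∑ g, ∑ s', p' g * k g s' *
      (Real.log (p' g * k g s' / ∑ g', p' g' * k g' s') - Real.log (p' g)))
    (hη' : η' = ∑ ω, ∑ s', pΩ ω * k (f (sOf ω)) s' *
      (Real.log (pΩ ω * k (f (sOf ω)) s' / ∑ ω', pΩ ω' * k (f (sOf ω')) s') -
        Real.log (pΩ ω)))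
    (hε : ε = ∑ ω, pΩ ω *
      kl (fun s => if s = sOf ω then (1 : ℝ) else 0) (fun s => p' (f s)))
    (hRub : ∀ g s', 0 < p' g * k g s' →
      Real.log (p' g * k g s' / ∑ g', p' g' * k g' s') - Real.log (p' g) ≤ Rmax)
    (hRat : ∃ g s', 0 < p' g * k g s' ∧
      Real.log (p' g * k g s' / ∑ g', p' g' * k g' s') - Real.log (p' g) = Rmax) :
    η' - η ≤ 2 * Rmax * Real.sqrt (ε / 2) :=
  stmt7_general pΩ sOf f k p' hΩ0 hΩ1 hk0 hk1 hp'0 hp'1 η η' ε Rmax hη hη' hε hRub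
end

section
/- Special case of Theorem 1: under the assumptions of Theorem 1, if additionally the self-generated goal distribution matches the prior, i.e., ∑_ω p(ω) p(g|ω) = p'(g) for all g (where p(g|ω) = ∑_s p(s|ω)p(g|s)), then η̂ = η. -/
open scoped BigOperators

private lemma term_eq {p c Z : ℝ} (hp : 0 < p) (hc : 0 ≤ c) (hZ : p * c ≤ Z) :
    p * c * (Real.log (p * c / Z) - Real.log p) =
      p * (c * (Real.log c - Real.log Z)) := by
  rcases eq_or_lt_of_le hc with h | h
  · simp [← h]
  · have hZ0 : 0 < Z := lt_of_lt_of_le (mul_pos hp h) hZ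
    rw [Real.log_div (by positivity) (ne_of_gt hZ0), Real.log_mul (ne_of_gt hp) (ne_of_gt h)]
    ring

/-- Special case of Theorem 1: same setup as Theorem 1 (joint
`p(ω)·[s = sOf ω]·[g = f s]·k(s̃|g)` with deterministic `p(s|ω)` and bijective
relabeling `f`).  If the self-generated goal distribution matches the prior,
i.e. `∑_ω p(ω) p(g|ω) = p'(g)` for all `g`, then `η̂ = η`. -/
theorem stmt8 {Ω S G S' : Type*} [Fintype Ω] [Fintype S] [Fintype G]
    [DecidableEq G] [Fintype S']
    (pΩ : Ω → ℝ) (sOf : Ω → S) (f : S ≃ G) (k : G → S' → ℝ) (p' : G → ℝ)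
    (hΩ0 : ∀ ω, 0 < pΩ ω) (hΩ1 : ∑ ω, pΩ ω = 1)
    (hk0 : ∀ g s', 0 ≤ k g s') (hk1 : ∀ g, ∑ s', k g s' = 1)
    (hp'0 : ∀ g, 0 < p' g) (hp'1 : ∑ g, p' g = 1)
    (hmatch : ∀ g, ∑ ω, pΩ ω * (if f (sOf ω) = g then (1 : ℝ) else 0) = p' g)
    (η η' : ℝ)
    (hη : η = ∑ g, ∑ s', p' g * k g s' *
      (Real.log (p' g * k g s' / ∑ g', p' g' * k g' s') - Real.log (p' g)))
    (hη' : η' = ∑ ω, ∑ s', pΩ ω * k (f (sOf ω)) s' *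
      (Real.log (pΩ ω * k (f (sOf ω)) s' / ∑ ω', pΩ ω' * k (f (sOf ω')) s') -
        Real.log (pΩ ω))) :
    η' = η := by
  set Z : S' → ℝ := fun s' => ∑ ω, pΩ ω * k (f (sOf ω)) s' with hZdef
  have hZeq : ∀ s', (∑ g, p' g * k g s') = Z s' := by
    intro s'
    calc (∑ g, p' g * k g s')
        = ∑ g, (∑ ω, pΩ ω * (if f (sOf ω) = g then (1 : ℝ) else 0)) * k g s' := by
          exact Finset.sum_congr rfl fun g _ => by rw [hmatch g]
      _ = ∑ ω, ∑ g, pΩ ω * (if f (sOf ω) = g then (1 : ℝ) else 0) * k g s' := by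
          simp only [Finset.sum_mul]; exact Finset.sum_comm ..
      _ = Z s' := by
          apply Finset.sum_congr rfl
          intro ω _
          simp [mul_ite, Finset.sum_ite_eq]
  set A : G → ℝ := fun g => ∑ s', k g s' * (Real.log (k g s') - Real.log (Z s'))
    with hAdef
  have hZle : ∀ ω s', pΩ ω * k (f (sOf ω)) s' ≤ Z s' := by
    intro ω s'
    exact Finset.single_le_sum (f := fun ω => pΩ ω * k (f (sOf ω)) s')
      (fun i _ => mul_nonneg (hΩ0 i).le (hk0 _ _)) (Finset.mem_univ ω)
  have hη'A : η' = ∑ ω, pΩ ω * A (f (sOf ω)) := by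
    rw [hη']
    apply Finset.sum_congr rfl
    intro ω _
    rw [hAdef]
    simp only [Finset.mul_sum]
    apply Finset.sum_congr rfl
    intro s' _
    exact term_eq (hΩ0 ω) (hk0 _ _) (hZle ω s')
  have hZle' : ∀ g s', p' g * k g s' ≤ Z s' := by
    intro g s'
    rw [← hZeq s']
    exact Finset.single_le_sum (f := fun g => p' g * k g s')
      (fun i _ => mul_nonneg (hp'0 i).le (hk0 _ _)) (Finset.mem_univ g)
  have hηA : η = ∑ g, p' g * A g := by
    rw [hη]
    apply Finset.sum_congr rfl
    intro g _
    rw [hAdef]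
    simp only [Finset.mul_sum]
    apply Finset.sum_congr rfl
    intro s' _
    rw [hZeq s']
    exact term_eq (hp'0 g) (hk0 _ _) (hZle' g s')
  rw [hη'A, hηA]
  calc (∑ ω, pΩ ω * A (f (sOf ω)))
      = ∑ ω, ∑ g, pΩ ω * (if f (sOf ω) = g then (1 : ℝ) else 0) * A g := by
        apply Finset.sum_congr rfl
        intro ω _
        simp [mul_ite, Finset.sum_ite_eq]
    _ = ∑ g, (∑ ω, pΩ ω * (if f (sOf ω) = g then (1 : ℝ) else 0)) * A g := by
        rw [Finset.sum_comm]; exact Finset.sum_congr rfl fun g _ => (Finset.sum_mul ..).symm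
    _ = ∑ g, p' g * A g :=
        Finset.sum_congr rfl fun g _ => by rw [hmatch g]
end

section
/- GPIM objective lower bound: under the Markov structure ω → s → g → s̃ on finite sets, I(s;ω) + I(s̃;g) ≥ I(s;ω) + I(s̃;ω) ≥ 2H(ω) + E[log q(ω|s) + log q(ω|s̃)] for any positive conditional q(ω|·). -/
open scoped BigOperators

/-- Mutual information of a finite joint distribution given as `p a b`. -/
noncomputable def mi {A B : Type*} [Fintype A] [Fintype B] (p : A → B → ℝ) : ℝ :=
  ∑ a, ∑ b, p a b * Real.log (p a b / ((∑ b', p a b') * (∑ a', p a' b)))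

/-- Shannon entropy of a finite distribution. -/
noncomputable def ent {A : Type*} [Fintype A] (p : A → ℝ) : ℝ :=
  -∑ a, p a * Real.log (p a)

/-!
Both inequalities are instances of Gibbs' inequality `∑ p log (p / q) ≥ 0` for a nonnegative `q`
of total mass at most that of `p`. For a Markov chain `a → b → c`, `I(b;c) - I(a;c)` is the
conditional mutual information `I(b;c | a)`, the divergence of `p(a,b,c)` from `p(a,b) p(c|a)`.
For a joint `p(a,b)` and any conditional `q(a|b)`, `I(a;b) - H(a) - E[log q(a|b)]` is the
divergence of `p(a,b)` from `p(b) q(a|b)`. The first gives `I(s̃;ω) ≤ I(s̃;g)`; the second,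
applied to `(ω, s)` and to `(ω, s̃)`, gives the variational bound.
-/

open Finset Real

theorem sum_mul_nonneg_of_eq_log_div {ι : Type*} [Fintype ι] {p q f : ι → ℝ}
    (hp : ∀ i, 0 ≤ p i) (hq : ∀ i, 0 ≤ q i) (hsum : ∑ i, q i ≤ ∑ i, p i)
    (hf : ∀ i, 0 < p i → 0 < q i ∧ f i = log (p i / q i)) :
    0 ≤ ∑ i, p i * f i := by
  have hterm : ∀ i, p i - q i ≤ p i * f i := by
    intro i
    rcases (hp i).eq_or_lt with hpi | hpi
    · simp [← hpi, hq i]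
    obtain ⟨hqi, hfi⟩ := hf i hpi
    calc p i - q i = -(p i * (q i / p i - 1)) := by field_simp; ring
      _ ≤ -(p i * log (q i / p i)) :=
          neg_le_neg (mul_le_mul_of_nonneg_left (log_le_sub_one_of_pos (div_pos hqi hpi)) hpi.le)
      _ = p i * f i := by rw [hfi, ← mul_neg, ← log_inv, inv_div]
  calc (0 : ℝ) ≤ ∑ i, (p i - q i) := by rw [sum_sub_distrib]; linarith
    _ ≤ ∑ i, p i * f i := sum_le_sum fun i _ => hterm i

theorem sum_mul_eq_self_of_sum_eq_one {ι : Type*} [Fintype ι] {k : ι → ℝ}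
    (hk : ∑ i, k i = 1) (x : ℝ) : ∑ i, x * k i = x := by
  rw [← mul_sum, hk, mul_one]

theorem sum_sum_sum_mul_mul_eq_one {X Y Z W : Type*} [Fintype Y] [Fintype Z] [Fintype W]
    {k₁ : X → Y → ℝ} {k₂ : Y → Z → ℝ} {k₃ : Z → W → ℝ} (h₁ : ∀ x, ∑ y, k₁ x y = 1)
    (h₂ : ∀ y, ∑ z, k₂ y z = 1) (h₃ : ∀ z, ∑ w, k₃ z w = 1) (x : X) :
    ∑ w, ∑ y, ∑ z, k₁ x y * k₂ y z * k₃ z w = 1 :=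
  calc _ = ∑ y, ∑ z, ∑ w, k₁ x y * k₂ y z * k₃ z w :=
        sum_comm.trans (sum_congr rfl fun y _ => sum_comm)
    _ = 1 := by simp only [← mul_sum, h₃, mul_one, h₂, h₁]

theorem ent_add_sum_mul_log_le_mi {A B : Type*} [Fintype A] [Fintype B]
    (p : A → B → ℝ) (pA : A → ℝ) (q : B → A → ℝ) (hp : ∀ a b, 0 ≤ p a b)
    (hpA : ∀ a, ∑ b, p a b = pA a) (hq0 : ∀ b a, 0 < q b a) (hq1 : ∀ b, ∑ a, q b a = 1) :
    ent pA + ∑ a, ∑ b, p a b * log (q b a) ≤ mi p := by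
  set pB : B → ℝ := fun b => ∑ a, p a b
  set L : A → B → ℝ := fun a b => log (p a b / ((∑ b', p a b') * pB b))
  have hent : ent pA = -∑ a, ∑ b, p a b * log (pA a) := by
    simp only [ent, ← sum_mul, hpA]
  have hkl : 0 ≤ ∑ i : A × B, p i.1 i.2 * (L i.1 i.2 + log (pA i.1) - log (q i.2 i.1)) := by
    refine sum_mul_nonneg_of_eq_log_div (q := fun i => pB i.2 * q i.2 i.1) (fun _ => hp _ _)
      (fun i => mul_nonneg (sum_nonneg fun a _ => hp a i.2) (hq0 _ _).le) ?_ ?_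
    · refine le_of_eq ?_
      rw [Fintype.sum_prod_type_right, Fintype.sum_prod_type_right]
      exact sum_congr rfl fun b _ => sum_mul_eq_self_of_sum_eq_one (hq1 b) (pB b)
    · rintro ⟨a, b⟩ hpab
      have hpAa : 0 < pA a := hpA a ▸ sum_pos' (fun b _ => hp a b) ⟨b, mem_univ _, hpab⟩
      have hpB : 0 < pB b := sum_pos' (fun a _ => hp a b) ⟨a, mem_univ _, hpab⟩
      have hqba := hq0 b a
      refine ⟨by positivity, ?_⟩
      change log (p a b / ((∑ b', p a b') * pB b)) + log (pA a) - log (q b a) = _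
      rw [hpA, ← log_mul (by positivity) hpAa.ne', ← log_div (by positivity) hqba.ne']
      congr 1
      field_simp
  simp only [Fintype.sum_prod_type, mul_add, mul_sub, sum_add_distrib, sum_sub_distrib] at hkl
  change 0 ≤ mi p + _ - _ at hkl
  linarith

theorem mi_eq_sum_of_sum_eq {X Y Z : Type*} [Fintype X] [Fintype Y] [Fintype Z]
    (p : X → Y → ℝ) (w : Z → X → Y → ℝ) (hw : ∀ x y, ∑ z, w z x y = p x y) :
    mi p = ∑ z, ∑ x, ∑ y, w z x y * log (p x y / ((∑ y', p x y') * ∑ x', p x' y)) := by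
  symm
  rw [sum_comm]
  refine sum_congr rfl fun x _ => ?_
  rw [sum_comm]
  exact sum_congr rfl fun y _ => by rw [← sum_mul, hw]

theorem mi_le_mi_of_markov {A B C : Type*} [Fintype A] [Fintype B] [Fintype C]
    (r : A → B → ℝ) (k : B → C → ℝ)
    (hr : ∀ a b, 0 ≤ r a b) (hk0 : ∀ b c, 0 ≤ k b c) (hk1 : ∀ b, ∑ c, k b c = 1) :
    mi (fun a c => ∑ b, r a b * k b c) ≤ mi (fun b c => (∑ a, r a b) * k b c) := by
  set rA : A → ℝ := fun a => ∑ b, r a b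
  set rB : B → ℝ := fun b => ∑ a, r a b
  set s : A → C → ℝ := fun a c => ∑ b, r a b * k b c
  have hsA : ∀ a, ∑ c, s a c = rA a := fun a => by
    simp only [s, rA]; rw [sum_comm]
    exact sum_congr rfl fun b _ => sum_mul_eq_self_of_sum_eq_one (hk1 b) _
  have hsB : ∀ c, ∑ b, rB b * k b c = ∑ a, s a c := fun c => by
    simp only [s, rB, sum_mul]; exact sum_comm
  have hrA0 : ∀ a, 0 ≤ rA a := fun a => sum_nonneg fun b _ => hr a b
  have hs0 : ∀ a c, 0 ≤ s a c := fun a c => sum_nonneg fun b _ => mul_nonneg (hr a b) (hk0 b c)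
  rw [mi_eq_sum_of_sum_eq (fun b c => rB b * k b c) (fun a b c => r a b * k b c)
      (fun b c => (sum_mul ..).symm), mi_eq_sum_of_sum_eq s (fun b a c => r a b * k b c)
      (fun a c => rfl), sum_comm (s := univ (α := B)), ← sub_nonneg]
  simp only [← sum_sub_distrib, ← mul_sub, ← Fintype.sum_prod_type']
  refine sum_mul_nonneg_of_eq_log_div (q := fun i => r i.1 i.2.1 * s i.1 i.2.2 / rA i.1)
    (fun _ => mul_nonneg (hr _ _) (hk0 _ _))
    (fun _ => div_nonneg (mul_nonneg (hr _ _) (hs0 _ _)) (hrA0 _)) (le_of_eq ?_) ?_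
  · simp only [Fintype.sum_prod_type]
    refine sum_congr rfl fun a _ => ?_
    calc ∑ b, ∑ c, r a b * s a c / rA a = rA a * rA a / rA a := by
          simp only [mul_div_assoc, ← mul_sum, ← sum_mul, ← sum_div, hsA]; rfl
      _ = rA a := mul_self_div_self _
      _ = ∑ b, ∑ c, r a b * k b c :=
          sum_congr rfl fun b _ => (sum_mul_eq_self_of_sum_eq_one (hk1 b) _).symm
  · rintro ⟨a, b, c⟩ hp
    have hrab : 0 < r a b := pos_of_mul_pos_left hp (hk0 b c)
    have hkbc : 0 < k b c := pos_of_mul_pos_right hp (hr a b)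
    have hsac : 0 < s a c := sum_pos' (fun b _ => mul_nonneg (hr a b) (hk0 b c)) ⟨b, mem_univ _, hp⟩
    have hrA : 0 < rA a := sum_pos' (fun b _ => hr a b) ⟨b, mem_univ _, hrab⟩
    have hrB : 0 < rB b := sum_pos' (fun a _ => hr a b) ⟨a, mem_univ _, hrab⟩
    have hsC : 0 < ∑ a, s a c := sum_pos' (fun a _ => hs0 a c) ⟨a, mem_univ _, hsac⟩
    refine ⟨by positivity, ?_⟩
    dsimp only
    rw [sum_mul_eq_self_of_sum_eq_one (hk1 b), hsB, hsA, ← log_div (by positivity) (by positivity)]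
    congr 1
    field_simp

theorem stmt14_general {Ω S G : Type*} [Fintype Ω] [Fintype S] [Fintype G]
    (pΩ : Ω → ℝ) (kS : Ω → S → ℝ) (kG : S → G → ℝ) (kS' : G → S → ℝ)
    (q : S → Ω → ℝ)
    (hΩ0 : ∀ ω, 0 ≤ pΩ ω)
    (hS0 : ∀ ω s, 0 ≤ kS ω s) (hS1 : ∀ ω, ∑ s, kS ω s = 1)
    (hG0 : ∀ s g, 0 ≤ kG s g) (hG1 : ∀ s, ∑ g, kG s g = 1)
    (hS'0 : ∀ g s', 0 ≤ kS' g s') (hS'1 : ∀ g, ∑ s', kS' g s' = 1)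
    (hq0 : ∀ s ω, 0 < q s ω) (hq1 : ∀ s, ∑ ω, q s ω = 1) :
    mi (fun ω s => pΩ ω * kS ω s) +
        mi (fun g s' => (∑ ω, ∑ s, pΩ ω * kS ω s * kG s g) * kS' g s') ≥
      mi (fun ω s => pΩ ω * kS ω s) +
        mi (fun ω s' => pΩ ω * ∑ s, ∑ g, kS ω s * kG s g * kS' g s') ∧
    mi (fun ω s => pΩ ω * kS ω s) +
        mi (fun ω s' => pΩ ω * ∑ s, ∑ g, kS ω s * kG s g * kS' g s') ≥
      2 * ent pΩ +
        ∑ ω, ∑ s, ∑ g, ∑ s', pΩ ω * kS ω s * kG s g * kS' g s' *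
          (Real.log (q s ω) + Real.log (q s' ω)) := by
  have hK1 : ∀ ω, ∑ s', ∑ s, ∑ g, kS ω s * kG s g * kS' g s' = 1 :=
    sum_sum_sum_mul_mul_eq_one hS1 hG1 hS'1
  constructor
  · have hjoint : (fun ω s' => pΩ ω * ∑ s, ∑ g, kS ω s * kG s g * kS' g s') =
        fun ω s' => ∑ g, (∑ s, pΩ ω * kS ω s * kG s g) * kS' g s' := by
      ext ω s'
      simp only [mul_sum, sum_mul, mul_assoc]
      exact sum_comm
    rw [ge_iff_le, hjoint]
    gcongr
    exact mi_le_mi_of_markov _ kS' (fun ω g => sum_nonneg fun s _ =>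
      mul_nonneg (mul_nonneg (hΩ0 ω) (hS0 ω s)) (hG0 s g)) hS'0 hS'1
  · have hbound₁ := ent_add_sum_mul_log_le_mi (fun ω s => pΩ ω * kS ω s) pΩ q
      (fun ω s => mul_nonneg (hΩ0 ω) (hS0 ω s))
      (fun ω => sum_mul_eq_self_of_sum_eq_one (hS1 ω) _) hq0 hq1
    have hbound₂ := ent_add_sum_mul_log_le_mi
      (fun ω s' => pΩ ω * ∑ s, ∑ g, kS ω s * kG s g * kS' g s') pΩ q
      (fun ω s' => mul_nonneg (hΩ0 ω) (sum_nonneg fun s _ => sum_nonneg fun g _ =>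
        mul_nonneg (mul_nonneg (hS0 ω s) (hG0 s g)) (hS'0 g s')))
      (fun ω => sum_mul_eq_self_of_sum_eq_one (hK1 ω) _) hq0 hq1
    have hmarg₁ : ∑ ω, ∑ s, ∑ g, ∑ s', pΩ ω * kS ω s * kG s g * kS' g s' * log (q s ω) =
        ∑ ω, ∑ s, pΩ ω * kS ω s * log (q s ω) := by
      simp only [← sum_mul, ← mul_sum, hS'1, hG1, mul_one]
    have hmarg₂ : ∑ ω, ∑ s, ∑ g, ∑ s', pΩ ω * kS ω s * kG s g * kS' g s' * log (q s' ω) =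
        ∑ ω, ∑ s', pΩ ω * (∑ s, ∑ g, kS ω s * kG s g * kS' g s') * log (q s' ω) := by
      refine sum_congr rfl fun ω _ => ?_
      simp only [mul_sum, sum_mul, mul_assoc]
      exact (sum_congr rfl fun s _ => sum_comm).trans sum_comm
    simp only [mul_add, sum_add_distrib, hmarg₁, hmarg₂]
    linarith

/-- Full GPIM chain of inequalities (Equations 3–4 and the surrogate `J`):
under the Markov structure ω → s → g → s̃ given by the joint
`p(ω)kS(s|ω)kG(g|s)kS'(s̃|g)`, for any positive conditional `q(ω|·)`,
`I(s;ω) + I(s̃;g) ≥ I(s;ω) + I(s̃;ω) ≥ 2H(ω) + E[log q(ω|s) + log q(ω|s̃)]`. -/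
theorem stmt14 {Ω S G : Type*} [Fintype Ω] [Fintype S] [Fintype G]
    (pΩ : Ω → ℝ) (kS : Ω → S → ℝ) (kG : S → G → ℝ) (kS' : G → S → ℝ)
    (q : S → Ω → ℝ)
    (hΩ0 : ∀ ω, 0 ≤ pΩ ω) (hΩ1 : ∑ ω, pΩ ω = 1)
    (hS0 : ∀ ω s, 0 ≤ kS ω s) (hS1 : ∀ ω, ∑ s, kS ω s = 1)
    (hG0 : ∀ s g, 0 ≤ kG s g) (hG1 : ∀ s, ∑ g, kG s g = 1)
    (hS'0 : ∀ g s', 0 ≤ kS' g s') (hS'1 : ∀ g, ∑ s', kS' g s' = 1)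
    (hq0 : ∀ s ω, 0 < q s ω) (hq1 : ∀ s, ∑ ω, q s ω = 1) :
    mi (fun ω s => pΩ ω * kS ω s) +
        mi (fun g s' => (∑ ω, ∑ s, pΩ ω * kS ω s * kG s g) * kS' g s') ≥
      mi (fun ω s => pΩ ω * kS ω s) +
        mi (fun ω s' => pΩ ω * ∑ s, ∑ g, kS ω s * kG s g * kS' g s') ∧
    mi (fun ω s => pΩ ω * kS ω s) +
        mi (fun ω s' => pΩ ω * ∑ s, ∑ g, kS ω s * kG s g * kS' g s') ≥
      2 * ent pΩ +
        ∑ ω, ∑ s, ∑ g, ∑ s', pΩ ω * kS ω s * kG s g * kS' g s' *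
          (Real.log (q s ω) + Real.log (q s' ω)) :=
  stmt14_general pΩ kS kG kS' q hΩ0 hS0 hS1 hG0 hG1 hS'0 hS'1 hq0 hq1
end
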